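/- Let (X, A_τ, →) be a labelled transition system and let α : X → P(Path_∼(X)) be given by α(x) = { [p] | p is an execution from x with trace(p) ∈ τ*a for some a ∈ A, or trace(p) ∈ τ* }. Then two states x, x' ∈ X are branching bisimilar if and only if they are P∘Path_∼-behaviourally equivalent, i.e., iff there exist a set Y, a function β : Y → P(Path_∼(Y)), and a function f : X → Y with β(f(z)) = { Path_∼(f)(c) | c ∈ α(z) } for all z ∈ X, such that f(x) = f(x'). -/

import Mathlib

open scoped Classical ENNReal

namespace PaperBB

/-! ## Paths -/

/-- Words over the alphabet `A_τ = A ∪ {τ}`; `none` plays the role of the silent action `τ`. -/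
abbrev Word (A : Type*) := List (Option A)

/-- A path on `X`: a function whose codomain is `X` and whose domain is the set of all
prefixes of some word `σ ∈ A_τ*`. -/
structure Path (A : Type*) (X : Type*) where
  word : Word A
  fn : {σ : Word A // σ <+: word} → X

namespace Path

variable {A X Y : Type*}

theorem prefixSnoc (σ : Word A) (a : Option A) : σ <+: σ ++ [a] := ⟨[a], rfl⟩

theorem nilPrefix (w : Word A) : ([] : Word A) <+: w := ⟨w, rfl⟩

/-- The value `p(ε)` of a path at the empty word. -/
def start (p : Path A X) : X := p.fn ⟨[], nilPrefix _⟩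

/-- The trace of a path: the maximal word in its domain. -/
def trace (p : Path A X) : Word A := p.word

/-- The last state reached by a path: `last p = p (trace p)`. -/
def last (p : Path A X) : X := p.fn ⟨p.word, List.prefix_refl _⟩

/-- `Path(f)(p) = f ∘ p`. -/
def map (f : X → Y) (p : Path A X) : Path A Y := ⟨p.word, fun σ => f (p.fn σ)⟩

/-- The prefix order on paths: `p ⪯ q` iff `dom p ⊆ dom q` and `q` agrees with `p` on `dom p`. -/
def le (p q : Path A X) : Prop :=
  ∃ h : p.word <+: q.word, ∀ (σ : Word A) (hσ : σ <+: p.word),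
    q.fn ⟨σ, hσ.trans h⟩ = p.fn ⟨σ, hσ⟩

/-- The strict prefix order on paths. -/
def lt (p q : Path A X) : Prop := p.le q ∧ p ≠ q

/-- `φ` is a stutter basis for the path `p`. -/
def IsStutterBasis (p : Path A X) (φ : {σ : Word A // σ <+: p.word} → Word A) : Prop :=
  φ ⟨[], nilPrefix _⟩ = [] ∧
  (∀ (σ : Word A) (h : σ ++ [(none : Option A)] <+: p.word),
      (p.fn ⟨σ ++ [none], h⟩ = p.fn ⟨σ, (prefixSnoc σ none).trans h⟩ →
        φ ⟨σ ++ [none], h⟩ = φ ⟨σ, (prefixSnoc σ none).trans h⟩) ∧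
      (p.fn ⟨σ ++ [none], h⟩ ≠ p.fn ⟨σ, (prefixSnoc σ none).trans h⟩ →
        φ ⟨σ ++ [none], h⟩ = φ ⟨σ, (prefixSnoc σ none).trans h⟩ ++ [none])) ∧
  (∀ (σ : Word A) (a : A) (h : σ ++ [some a] <+: p.word),
      φ ⟨σ ++ [some a], h⟩ = φ ⟨σ, (prefixSnoc σ (some a)).trans h⟩ ++ [some a])

/-- Auxiliary recursion computing the stutter basis of `p` on the prefix of length `n`. -/
noncomputable def stutterWordAux (p : Path A X) : ℕ → Word A
  | 0 => []
  | n + 1 =>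
    if h : n < p.word.length then
      if (p.word.get ⟨n, h⟩) = none ∧
          p.fn ⟨p.word.take (n + 1), List.take_prefix _ _⟩ =
            p.fn ⟨p.word.take n, List.take_prefix _ _⟩ then
        stutterWordAux p n
      else stutterWordAux p n ++ [p.word.get ⟨n, h⟩]
    else []

/-- The (unique) stutter basis of a path `p`. -/
noncomputable def stutterBasis (p : Path A X) (σ : {σ : Word A // σ <+: p.word}) : Word A :=
  stutterWordAux p σ.1.length

/-- The stutter invariant path `♮p` relative to `p`: its domain is the image of the stutter
basis `φ` and it satisfies `♮p ∘ φ = p`. -/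
noncomputable def stutter (p : Path A X) : Path A X where
  word := stutterBasis p ⟨p.word, List.prefix_refl _⟩
  fn := fun w =>
    haveI : Nonempty {σ : Word A // σ <+: p.word} := ⟨⟨[], nilPrefix _⟩⟩
    p.fn (Function.invFun (stutterBasis p) w.1)

end Path

/-- Stutter equivalence of paths: `p ∼ q` iff `♮p = ♮q`. -/
def StutterEquiv {A X : Type*} (p q : Path A X) : Prop := p.stutter = q.stutter

instance pathSetoid (A X : Type*) : Setoid (Path A X) :=
  ⟨StutterEquiv, ⟨fun _ => rfl, Eq.symm, Eq.trans⟩⟩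

/-- The set `Path_∼(X)` of paths up to stutter equivalence. -/
abbrev PathQuot (A X : Type*) := Quotient (pathSetoid A X)

/-- The quotient map `π : Path(X) → Path_∼(X)`. -/
def PathQuot.mk {A X : Type*} (p : Path A X) : PathQuot A X := Quotient.mk _ p

/-- `Path_∼(f)[p] = [f ∘ p]`. -/
noncomputable def PathQuot.map {A X Y : Type*} (f : X → Y) (c : PathQuot A X) : PathQuot A Y :=
  PathQuot.mk (Path.map f c.out)

/-- The order on `Path_∼(X)`: `[p] ⪯ [q]` iff `♮p ⪯ ♮q`. -/
def PathQuot.le {A X : Type*} (c d : PathQuot A X) : Prop :=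
  ∃ p q : Path A X, PathQuot.mk p = c ∧ PathQuot.mk q = d ∧ p.stutter.le q.stutter

/-- The set of words of the shape `τ*aτ*`. -/
def TauStarATauStar {A : Type*} (a : A) (w : Word A) : Prop :=
  ∃ n m : ℕ, w = List.replicate n none ++ some a :: List.replicate m none

/-! ## Prefix orders, the sobrification `X∞`, Scott topology, valuations -/

section OrderTheory

variable {Z : Type*}

/-- Downward-closed subsets: the closed sets of the Alexandroff topology. -/
def IsDownClosed [Preorder Z] (C : Set Z) : Prop :=
  ∀ ⦃x⦄, x ∈ C → ∀ ⦃y⦄, y ≤ x → y ∈ C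

/-- Irreducible closed subsets of the Alexandroff topology. -/
def IsIrredClosed [Preorder Z] (C : Set Z) : Prop :=
  IsDownClosed C ∧ C.Nonempty ∧
    ∀ C₁ C₂ : Set Z, IsDownClosed C₁ → IsDownClosed C₂ → C = C₁ ∪ C₂ → C = C₁ ∨ C = C₂

/-- A set is non-sober if it is irreducible and closed (w.r.t. the Alexandroff topology) but is
not the closure (the principal ideal) of any single point. -/
def NonSober [Preorder Z] (C : Set Z) : Prop :=
  IsIrredClosed C ∧ ¬ ∃ x : Z, C = {y | y ≤ x}

/-- `X∞`: `X` together with a fresh limit point `∞_C` for every non-sober `C ⊆ X`. -/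
def Extended (Z : Type*) [Preorder Z] := Z ⊕ {C : Set Z // NonSober C}

/-- The order `⪯'` on `X∞` extending `⪯` by `∞_C ⪯' ∞_C` and `x ⪯' ∞_C` for `x ∈ C`. -/
def extLE [Preorder Z] : Extended Z → Extended Z → Prop
  | Sum.inl x, Sum.inl y => x ≤ y
  | Sum.inl x, Sum.inr C => x ∈ C.1
  | Sum.inr _, Sum.inl _ => False
  | Sum.inr C, Sum.inr D => C = D

instance [PartialOrder Z] : PartialOrder (Extended Z) where
  le := extLE
  le_refl a := by
    cases a with
    | inl x => exact le_refl x
    | inr C => exact rfl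
  le_trans a b c hab hbc := by
    cases a with
    | inl x =>
      cases b with
      | inl y =>
        cases c with
        | inl z => exact le_trans hab hbc
        | inr C => exact C.2.1.1 hbc hab
      | inr C =>
        cases c with
        | inl z => exact False.elim hbc
        | inr D => exact (show C = D from hbc) ▸ hab
    | inr C =>
      cases b with
      | inl y => exact False.elim hab
      | inr D =>
        cases c with
        | inl z => exact False.elim hbc
        | inr E => exact (show C = D from hab).trans (show D = E from hbc)
  le_antisymm a b hab hba := by
    cases a with
    | inl x =>
      cases b with
      | inl y => exact congrArg Sum.inl (le_antisymm hab hba)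
      | inr C => exact False.elim hba
    | inr C =>
      cases b with
      | inl y => exact False.elim hab
      | inr D => exact congrArg Sum.inr hab

/-- Scott-open subsets: upward closed and inaccessible by directed joins. -/
def ScottOpen {W : Type*} [Preorder W] (U : Set W) : Prop :=
  (∀ ⦃x y⦄, x ∈ U → x ≤ y → y ∈ U) ∧
  ∀ D : Set W, D.Nonempty → DirectedOn (· ≤ ·) D → ∀ s : W, IsLUB D s → s ∈ U →
    (D ∩ U).Nonempty

/-- Scott-closed subsets. -/
def ScottClosed {W : Type*} [Preorder W] (C : Set W) : Prop := ScottOpen Cᶜ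

end OrderTheory

section Valuation

variable {W : Type*}

/-- A valuation on a collection `Op` of open sets: strict, monotone and modular. -/
def IsValuationOn (Op : Set (Set W)) (μ : Set W → ℝ≥0∞) : Prop :=
  μ ∅ = 0 ∧
  (∀ U ∈ Op, ∀ V ∈ Op, U ⊆ V → μ U ≤ μ V) ∧
  (∀ U ∈ Op, ∀ V ∈ Op, μ U + μ V = μ (U ∪ V) + μ (U ∩ V))

/-- Scott continuity of a valuation: it commutes with unions of directed families of opens. -/
def IsScottContinuousOn (Op : Set (Set W)) (μ : Set W → ℝ≥0∞) : Prop :=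
  ∀ 𝒟 : Set (Set W), 𝒟.Nonempty → (∀ U ∈ 𝒟, U ∈ Op) → DirectedOn (· ⊆ ·) 𝒟 →
    μ (⋃₀ 𝒟) = ⨆ U ∈ 𝒟, μ U

/-- Local finiteness: every point has a finitely valued open neighbourhood. -/
def IsLocallyFiniteOn (Op : Set (Set W)) (μ : Set W → ℝ≥0∞) : Prop :=
  ∀ x : W, ∃ U ∈ Op, x ∈ U ∧ μ U < ⊤

/-- The open sets of the Alexandroff topology of a preorder: the upward-closed sets. -/
def UpClosedSets (W : Type*) [Preorder W] : Set (Set W) :=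
  {U | ∀ ⦃x y⦄, x ∈ U → x ≤ y → y ∈ U}

/-- The Scott-open subsets of a preorder. -/
def ScottOpens (W : Type*) [Preorder W] : Set (Set W) := {U | ScottOpen U}

end Valuation

/-- The separation closure `U* = {x ∈ U | cl {x} ∩ U = {x}}` of a subset of a
topological space. -/
def sepClosure {W : Type*} [TopologicalSpace W] (U : Set W) : Set W :=
  {x ∈ U | closure {x} ∩ U = {x}}

/-! ## Fully probabilistic transition systems -/

section Prob

variable {A X : Type*}

/-- A fully probabilistic transition system. -/
structure FPTS (A X : Type*) where
  P : X → Option A → X → ℝ≥0∞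
  le_one : ∀ x a y, P x a y ≤ 1
  finite_support : ∀ x : X, {q : Option A × X | 0 < P x q.1 q.2}.Finite
  total : ∀ x : X,
    (∑' q : Option A × X, P x q.1 q.2) = 0 ∨ (∑' q : Option A × X, P x q.1 q.2) = 1

/-- `p` is an execution from `x`. -/
def IsExec (S : FPTS A X) (x : X) (p : Path A X) : Prop :=
  p.start = x ∧
  ∀ (σ : Word A) (a : Option A) (h : σ ++ [a] <+: p.word),
    0 < S.P (p.fn ⟨σ, (Path.prefixSnoc σ a).trans h⟩) a (p.fn ⟨σ ++ [a], h⟩)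

/-- The weight function `μ_P` on paths: the product of the transition probabilities along an
execution, and `0` on paths that are not executions. -/
noncomputable def pathWeight (S : FPTS A X) (p : Path A X) : ℝ≥0∞ :=
  if ∃ x : X, IsExec S x p then
    ∏ i : Fin p.word.length,
      S.P (p.fn ⟨p.word.take i.1, List.take_prefix _ _⟩)
          (p.word.get i)
          (p.fn ⟨p.word.take (i.1 + 1), List.take_prefix _ _⟩)
  else 0

/-- `x →_L Y`: executions from `x` with trace in `L`, last state in `Y`, and no strict prefix
witnessing the same. -/
def stepSet (S : FPTS A X) (x : X) (L : Set (Word A)) (Y : Set X) : Set (Path A X) :=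
  {p | IsExec S x p ∧ p.trace ∈ L ∧ p.last ∈ Y ∧
       ∀ q : Path A X, q.lt p → q.trace ∈ L → q.last ∉ Y}

/-- `x ⇒_L Y`: paths starting in `x` with trace in `L` and last state in `Y`. -/
def reachSet (x : X) (L : Set (Word A)) (Y : Set X) : Set (Path A X) :=
  {p | p.start = x ∧ p.trace ∈ L ∧ p.last ∈ Y}

/-- The separation closure `U*` of a set of paths (w.r.t. the prefix order). -/
def sepMin (U : Set (Path A X)) : Set (Path A X) :=
  {p ∈ U | ∀ q ∈ U, q.le p → q = p}

/-- The upward-closed sets of paths: the opens of the Alexandroff topology on `Path(X)`. -/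
def pathUpSets (A X : Type*) : Set (Set (Path A X)) :=
  {U | ∀ p ∈ U, ∀ q : Path A X, p.le q → q ∈ U}

end Prob

/-! ## Labelled transition systems -/

section LTS

variable {A X : Type}

/-- `p` is an execution of the labelled transition system `Tr` from `x`. -/
def IsExecLTS (Tr : X → Option A → X → Prop) (x : X) (p : Path A X) : Prop :=
  p.start = x ∧
  ∀ (σ : Word A) (a : Option A) (h : σ ++ [a] <+: p.word),
    Tr (p.fn ⟨σ, (Path.prefixSnoc σ a).trans h⟩) a (p.fn ⟨σ ++ [a], h⟩)

/-- Branching bisimulation. -/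
def IsBranchingBisim (Tr : X → Option A → X → Prop) (R : X → X → Prop) : Prop :=
  Symmetric R ∧
  ∀ (x x' y : X) (a : Option A), Tr x a x' → R x y →
    (a = none ∧ R x' y) ∨
    ∃ y' y'' : X, Relation.ReflTransGen (fun u v => Tr u none v) y y' ∧
      Tr y' a y'' ∧ R x y' ∧ R x' y''

/-- Two states are branching bisimilar if some branching bisimulation relates them. -/
def BranchingBisimilar (Tr : X → Option A → X → Prop) (x x' : X) : Prop :=
  ∃ R : X → X → Prop, IsBranchingBisim Tr R ∧ R x x'

/-- The path-based coalgebra `α : X → P(Path_∼ X)` of a labelled transition system: the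
stutter classes of executions from `x` with trace in `τ*a` (for some `a ∈ A`) or in `τ*`. -/
def ltsAlpha (Tr : X → Option A → X → Prop) (x : X) : Set (PathQuot A X) :=
  {c | ∃ p : Path A X, IsExecLTS Tr x p ∧
    ((∃ (a : A) (n : ℕ), p.word = List.replicate n none ++ [some a]) ∨
     (∃ n : ℕ, p.word = List.replicate n (none : Option A))) ∧
    c = PathQuot.mk p}

end LTS

/-!
A path is determined by its start state and its list of steps, and its stutter class by the
start state together with that list stripped of the `τ`-steps that do not change the state
(`destutter`). So `Path_∼(f)[p] = Path_∼(f)[q]` says that `f ∘ p` and `f ∘ q` start at the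
same point and have the same destuttered step list.

If `f` is a coalgebra morphism and `f x = f y`, the one-step execution `x →a x'` must be
matched by an execution from `y` whose image destutters to that single step, i.e. by
`y ⇒ y' →a y''` with `y'` in the class of `y` and `y''` in the class of `x'`: the kernel of `f`
is a branching bisimulation. Conversely, take the quotient by semi-branching bisimilarity, which
contains branching bisimilarity and is an equivalence because semi-branching simulations
compose. By the stuttering property, the intermediate states of a matching `y ⇒ y'` stay in the
class of `y`, so an execution in `τ*a` or `τ*` from `x` is matched from any bisimilar `y` by one
with the same destuttered image in the quotient.
-/

section Steps

variable {A X Y : Type}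

def lastState (x : X) (l : List (Option A × X)) : X := l.foldl (fun _ s => s.2) x

@[simp] theorem lastState_nil (x : X) : lastState x ([] : List (Option A × X)) = x := rfl

@[simp] theorem lastState_cons (x : X) (s : Option A × X) (l : List (Option A × X)) :
    lastState x (s :: l) = lastState s.2 l := rfl

theorem lastState_append (x : X) (l m : List (Option A × X)) :
    lastState x (l ++ m) = lastState (lastState x l) m :=
  List.foldl_append

theorem lastState_take_add_one (x : X) (l : List (Option A × X)) {i : ℕ} (hi : i < l.length) :
    lastState x (l.take (i + 1)) = l[i].2 := by
  rw [List.take_add_one, List.getElem?_eq_getElem hi, lastState_append]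
  rfl

theorem lastState_map (f : X → Y) (x : X) (l : List (Option A × X)) :
    lastState (f x) (l.map (Prod.map id f)) = f (lastState x l) := by
  induction l generalizing x with
  | nil => rfl
  | cons s l ih => exact ih s.2

noncomputable def destutter : X → List (Option A × X) → List (Option A × X)
  | _, [] => []
  | x, (a, y) :: l => if a = none ∧ y = x then destutter y l else (a, y) :: destutter y l

@[simp] theorem destutter_nil (x : X) : destutter x ([] : List (Option A × X)) = [] := rfl

theorem destutter_cons (x : X) (a : Option A) (y : X) (l : List (Option A × X)) :
    destutter x ((a, y) :: l) =
      if a = none ∧ y = x then destutter y l else (a, y) :: destutter y l := rfl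

theorem destutter_singleton (x : X) (a : Option A) (y : X) :
    destutter x [(a, y)] = if a = none ∧ y = x then [] else [(a, y)] := by
  rw [destutter_cons]
  split <;> rfl

theorem destutter_append (x : X) (l m : List (Option A × X)) :
    destutter x (l ++ m) = destutter x l ++ destutter (lastState x l) m := by
  induction l generalizing x with
  | nil => rfl
  | cons s l ih =>
    obtain ⟨a, y⟩ := s
    rw [List.cons_append, destutter_cons, destutter_cons, lastState_cons, ih]
    split <;> rfl

theorem destutter_eq_nil {x : X} {l : List (Option A × X)}
    (h : ∀ s ∈ l, s.1 = none ∧ s.2 = x) : destutter x l = [] := by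
  induction l with
  | nil => rfl
  | cons s l ih =>
    obtain ⟨a, y⟩ := s
    have hs := h _ List.mem_cons_self
    rw [destutter_cons, if_pos hs, show y = x from hs.2]
    exact ih fun s hs' => h s (List.mem_cons_of_mem _ hs')

theorem lastState_destutter (x : X) (l : List (Option A × X)) :
    lastState x (destutter x l) = lastState x l := by
  induction l generalizing x with
  | nil => rfl
  | cons s l ih =>
    obtain ⟨a, y⟩ := s
    rw [destutter_cons]
    split
    · next h => rw [← h.2, ih]; rfl
    · exact ih y

theorem destutter_take_prefix (x : X) (l : List (Option A × X)) (n : ℕ) :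
    destutter x (l.take n) <+: destutter x l := by
  conv_rhs => rw [← List.take_append_drop n l, destutter_append]
  exact List.prefix_append _ _

theorem exists_destutter_take_eq (x : X) (l : List (Option A × X)) {k : ℕ}
    (hk : k ≤ (destutter x l).length) :
    ∃ n ≤ l.length, destutter x (l.take n) = (destutter x l).take k := by
  induction l generalizing x k with
  | nil => exact ⟨0, le_rfl, by simp⟩
  | cons s l ih =>
    obtain ⟨a, y⟩ := s
    by_cases h : a = none ∧ y = x
    · rw [destutter_cons, if_pos h] at hk ⊢
      obtain ⟨n, hn, hd⟩ := ih y hk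
      exact ⟨n + 1, by simpa using hn,
        by rw [List.take_succ_cons, destutter_cons, if_pos h, hd]⟩
    · rw [destutter_cons, if_neg h] at hk ⊢
      cases k with
      | zero => exact ⟨0, Nat.zero_le _, rfl⟩
      | succ k =>
        obtain ⟨n, hn, hd⟩ := ih y (k := k) (by simpa using hk)
        exact ⟨n + 1, by simpa using hn,
          by rw [List.take_succ_cons, destutter_cons, if_neg h, hd, List.take_succ_cons]⟩

theorem destutter_map_destutter (f : X → Y) (x : X) (l : List (Option A × X)) :
    destutter (f x) ((destutter x l).map (Prod.map id f)) =
      destutter (f x) (l.map (Prod.map id f)) := by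
  induction l generalizing x with
  | nil => rfl
  | cons s l ih =>
    obtain ⟨a, y⟩ := s
    rw [destutter_cons]
    split
    · next h => rw [← h.2, ih, List.map_cons, Prod.map, destutter_cons, if_pos ⟨h.1, rfl⟩]
    · rw [List.map_cons, List.map_cons, Prod.map, destutter_cons, destutter_cons, ih]

end Steps

section Runs

variable {A X : Type} {Tr : X → Option A → X → Prop}

inductive IsRun (Tr : X → Option A → X → Prop) : X → List (Option A × X) → Prop
  | nil (x : X) : IsRun Tr x []
  | cons {x : X} {a : Option A} {y : X} {l : List (Option A × X)} :
      Tr x a y → IsRun Tr y l → IsRun Tr x ((a, y) :: l)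

theorem IsRun.append {x : X} {l m : List (Option A × X)} (hl : IsRun Tr x l)
    (hm : IsRun Tr (lastState x l) m) : IsRun Tr x (l ++ m) := by
  induction hl with
  | nil => exact hm
  | cons hstep _ ih => exact .cons hstep (ih hm)

theorem isRun_iff_forall_getElem {x : X} {l : List (Option A × X)} :
    IsRun Tr x l ↔ ∀ i (hi : i < l.length), Tr (lastState x (l.take i)) l[i].1 l[i].2 := by
  induction l generalizing x with
  | nil => exact ⟨fun _ i hi => absurd hi (Nat.not_lt_zero i), fun _ => .nil x⟩
  | cons s l ih =>
    obtain ⟨a, y⟩ := s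
    constructor
    · rintro (_ | ⟨hstep, hl⟩) (_ | i) hi
      · exact hstep
      · exact ih.1 hl i (Nat.lt_of_succ_lt_succ hi)
    · intro h
      exact .cons (h 0 (Nat.succ_pos _))
        (ih.2 fun i hi => h (i + 1) (Nat.succ_lt_succ hi))

abbrev SilentReach (Tr : X → Option A → X → Prop) : X → X → Prop :=
  Relation.ReflTransGen fun u v => Tr u none v

theorem SilentReach.exists_run {x y : X} (h : SilentReach Tr x y) :
    ∃ l, IsRun Tr x l ∧ lastState x l = y ∧
      ∀ s ∈ l, s.1 = none ∧ SilentReach Tr x s.2 ∧ SilentReach Tr s.2 y := by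
  induction h using Relation.ReflTransGen.head_induction_on with
  | refl => exact ⟨[], .nil y, rfl, by simp⟩
  | head hstep hreach ih =>
    obtain ⟨l, hl, hlast, hstates⟩ := ih
    refine ⟨(none, _) :: l, .cons hstep hl, hlast, ?_⟩
    rintro s (_ | ⟨_, hs⟩)
    · exact ⟨rfl, .single hstep, hreach⟩
    · obtain ⟨hsil, hfrom, hto⟩ := hstates s hs
      exact ⟨hsil, .head hstep hfrom, hto⟩

def SilentButLast (w : Word A) : Prop := ∀ a ∈ w.dropLast, a = none

theorem silentButLast_cons {a : Option A} {w : Word A} :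
    SilentButLast (a :: w) ↔ w = [] ∨ a = none ∧ SilentButLast w := by
  rcases eq_or_ne w [] with rfl | hw
  · simp [SilentButLast]
  · simp [SilentButLast, List.dropLast_cons_of_ne_nil hw, hw]

theorem silentButLast_of_forall {w : Word A} (h : ∀ a ∈ w, a = none) : SilentButLast w :=
  fun a ha => h a (List.dropLast_subset _ ha)

theorem SilentButLast.append {v w : Word A} (hv : ∀ a ∈ v, a = none) (hw : SilentButLast w) :
    SilentButLast (v ++ w) := by
  intro a ha
  rw [List.dropLast_append] at ha
  split at ha
  · exact hv a (List.dropLast_subset _ ha)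
  · rcases List.mem_append.1 ha with ha | ha
    exacts [hv a ha, hw a ha]

theorem silentButLast_iff {w : Word A} :
    SilentButLast w ↔
      (∃ (a : A) (n : ℕ), w = List.replicate n none ++ [some a]) ∨
        ∃ n : ℕ, w = List.replicate n none := by
  constructor
  · intro h
    rcases List.eq_nil_or_concat w with rfl | ⟨v, b, rfl⟩
    · exact .inr ⟨0, rfl⟩
    · have hv : v = List.replicate v.length none :=
        List.eq_replicate_iff.2 ⟨rfl, by simpa [SilentButLast] using h⟩
      rw [List.concat_eq_append, hv]
      cases b with
      | none => exact .inr ⟨v.length + 1, List.replicate_succ'.symm⟩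
      | some a => exact .inl ⟨a, v.length, rfl⟩
  · rintro (⟨a, n, rfl⟩ | ⟨n, rfl⟩) b hb
    · rw [List.dropLast_concat] at hb
      exact List.eq_of_mem_replicate hb
    · rw [List.dropLast_replicate] at hb
      exact List.eq_of_mem_replicate hb

end Runs

namespace Path

variable {A X Y : Type}

theorem ext {p q : Path A X} (hword : p.word = q.word)
    (hfn : ∀ σ (hp : σ <+: p.word) (hq : σ <+: q.word), p.fn ⟨σ, hp⟩ = q.fn ⟨σ, hq⟩) :
    p = q := by
  obtain ⟨w, f⟩ := p
  obtain ⟨w', f'⟩ := q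
  subst hword
  congr
  funext ⟨σ, hσ⟩
  exact hfn σ hσ hσ

-- A path is encoded by its start state and its list of steps `(a, p(σa))`.
def ofSteps (x : X) (l : List (Option A × X)) : Path A X :=
  ⟨l.map Prod.fst, fun σ => lastState x (l.take σ.1.length)⟩

def steps (p : Path A X) : List (Option A × X) :=
  List.ofFn fun i : Fin p.word.length =>
    (p.word.get i, p.fn ⟨p.word.take (i + 1), List.take_prefix _ _⟩)

@[simp] theorem word_ofSteps (x : X) (l : List (Option A × X)) :
    (ofSteps x l).word = l.map Prod.fst := rfl

theorem steps_ofSteps (x : X) (l : List (Option A × X)) : (ofSteps x l).steps = l := by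
  refine List.ext_getElem (by simp [steps]) fun i hi hi' => ?_
  simp only [steps, List.getElem_ofFn]
  refine Prod.ext (by simp) ?_
  change lastState x (l.take ((l.map Prod.fst).take (i + 1)).length) = _
  rw [List.length_take, List.length_map, Nat.min_eq_left hi', lastState_take_add_one]

theorem ofSteps_steps (p : Path A X) : ofSteps p.start p.steps = p := by
  refine ext (by simp [steps, List.map_ofFn, Function.comp_def]) fun σ _ hσ => ?_
  change lastState p.start (p.steps.take σ.length) = p.fn ⟨σ, hσ⟩
  have hσ' := List.prefix_iff_eq_take.1 hσ
  cases h : σ.length with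
  | zero => exact congrArg p.fn (Subtype.ext (List.length_eq_zero_iff.1 h).symm)
  | succ k =>
    rw [lastState_take_add_one _ _ (by simp [steps]; have := hσ.length_le; omega)]
    simp only [steps, List.getElem_ofFn]
    exact congrArg p.fn (Subtype.ext (h ▸ hσ').symm)

theorem exists_eq_ofSteps (p : Path A X) : ∃ x l, p = ofSteps x l :=
  ⟨_, _, (ofSteps_steps p).symm⟩

theorem ofSteps_inj {x y : X} {l m : List (Option A × X)} :
    ofSteps x l = ofSteps y m ↔ x = y ∧ l = m := by
  refine ⟨fun h => ⟨congrArg start h, ?_⟩, fun ⟨hx, hl⟩ => hx ▸ hl ▸ rfl⟩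
  rw [← steps_ofSteps x l, h, steps_ofSteps]

theorem map_ofSteps (f : X → Y) (x : X) (l : List (Option A × X)) :
    (ofSteps x l).map f = ofSteps (f x) (l.map (Prod.map id f)) := by
  refine ext (by simp [map]) fun σ _ _ => ?_
  change f (lastState x _) = lastState (f x) _
  rw [← List.map_take, lastState_map]

theorem stutterWordAux_ofSteps (x : X) (l : List (Option A × X)) {n : ℕ} (hn : n ≤ l.length) :
    stutterWordAux (ofSteps x l) n = (destutter x (l.take n)).map Prod.fst := by
  induction n with
  | zero => rfl
  | succ n ih =>
    have hn' : n < l.length := hn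
    have hstate : ∀ k ≤ l.length, (ofSteps x l).fn ⟨(ofSteps x l).word.take k,
        List.take_prefix _ _⟩ = lastState x (l.take k) := fun k hk => by
      simp [ofSteps, Nat.min_eq_left hk]
    have hlast := hstate (n + 1) hn
    rw [lastState_take_add_one _ _ hn'] at hlast
    rw [stutterWordAux, dif_pos (by simpa using hn'), ih hn'.le]
    conv_rhs => rw [List.take_add_one, List.getElem?_eq_getElem hn', Option.toList_some,
      destutter_append, destutter_singleton]
    simp only [hlast, hstate n hn'.le]
    simp only [List.get_eq_getElem, word_ofSteps, List.getElem_map]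
    split <;> simp

theorem stutter_ofSteps (x : X) (l : List (Option A × X)) :
    (ofSteps x l).stutter = ofSteps x (destutter x l) := by
  have hword : (ofSteps x l).stutter.word = (destutter x l).map Prod.fst := by
    change stutterWordAux (ofSteps x l) (l.map Prod.fst).length = _
    rw [List.length_map, stutterWordAux_ofSteps x l le_rfl, List.take_length]
  refine ext hword fun w hw _ => ?_
  rw [hword] at hw
  have : Nonempty {σ : Word A // σ <+: (ofSteps x l).word} := ⟨⟨[], nilPrefix _⟩⟩
  set σ := Function.invFun (stutterBasis (ofSteps x l)) w
  have hσ : (destutter x (l.take σ.1.length)).map Prod.fst = w := by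
    obtain ⟨n, hn, hd⟩ :=
      exists_destutter_take_eq x l (k := w.length) (by simpa using hw.length_le)
    have hbasis :
        stutterBasis (ofSteps x l) ⟨(l.map Prod.fst).take n, List.take_prefix _ _⟩ = w := by
      change stutterWordAux _ _ = _
      rw [List.length_take, List.length_map, Nat.min_eq_left hn, stutterWordAux_ofSteps x l hn, hd,
        List.map_take, ← List.prefix_iff_eq_take.1 hw]
    rw [← stutterWordAux_ofSteps x l (by simpa using σ.2.length_le)]
    exact Function.invFun_eq ⟨_, hbasis⟩
  -- `♮p` takes at `w` the value of `p` at any `φ`-preimage of `w`; `destutter` keeps last states.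
  change lastState x (l.take σ.1.length) = lastState x ((destutter x l).take w.length)
  rw [← lastState_destutter, List.prefix_iff_eq_take.1 (destutter_take_prefix x l σ.1.length),
    ← hσ, List.length_map]

theorem isExecLTS_ofSteps {Tr : X → Option A → X → Prop} {x : X} {l : List (Option A × X)} :
    IsExecLTS Tr x (ofSteps x l) ↔ IsRun Tr x l := by
  rw [isRun_iff_forall_getElem]
  refine ⟨fun ⟨_, h⟩ i hi => ?_, fun h => ⟨rfl, fun σ a hσ => ?_⟩⟩
  · have hpre : (l.map Prod.fst).take i ++ [l[i].1] <+: l.map Prod.fst := by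
      simpa [List.take_add_one, hi] using List.take_prefix (i + 1) (l.map Prod.fst)
    have := h _ _ hpre
    change Tr (lastState x (l.take ((l.map Prod.fst).take i).length)) _
      (lastState x (l.take ((l.map Prod.fst).take i ++ [l[i].1]).length)) at this
    simpa [Nat.min_eq_left hi.le, lastState_take_add_one _ _ hi] using this
  · have hi : σ.length < l.length := by simpa using hσ.length_le
    have ha : a = l[σ.length].1 := by simpa using hσ.getElem (i := σ.length) (by simp)
    change Tr (lastState x (l.take σ.length)) a (lastState x (l.take (σ ++ [a]).length))
    rw [List.length_append, List.length_singleton, lastState_take_add_one _ _ hi, ha]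
    exact h _ hi

end Path

namespace PathQuot

variable {A X Y : Type}

theorem mk_ofSteps_eq_mk_ofSteps_iff {x y : X} {l m : List (Option A × X)} :
    mk (Path.ofSteps x l) = mk (Path.ofSteps y m) ↔ x = y ∧ destutter x l = destutter y m := by
  rw [mk, mk, Quotient.eq]
  change (Path.ofSteps x l).stutter = (Path.ofSteps y m).stutter ↔ _
  rw [Path.stutter_ofSteps, Path.stutter_ofSteps, Path.ofSteps_inj]

theorem map_mk (f : X → Y) (p : Path A X) : PathQuot.map f (mk p) = mk (p.map f) := by
  obtain ⟨x, l, rfl⟩ := Path.exists_eq_ofSteps p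
  obtain ⟨y, m, hout⟩ := Path.exists_eq_ofSteps (mk (Path.ofSteps x l)).out
  have hxy : x = y ∧ destutter x l = destutter y m :=
    mk_ofSteps_eq_mk_ofSteps_iff.1 (by rw [← hout]; exact (Quotient.out_eq _).symm)
  rw [PathQuot.map, hout, Path.map_ofSteps, Path.map_ofSteps, mk_ofSteps_eq_mk_ofSteps_iff,
    ← destutter_map_destutter, ← destutter_map_destutter f x, hxy.2, hxy.1]
  exact ⟨rfl, rfl⟩

theorem map_mk_ofSteps (f : X → Y) (x : X) (l : List (Option A × X)) :
    PathQuot.map f (mk (Path.ofSteps x l)) = mk (Path.ofSteps (f x) (l.map (Prod.map id f))) := by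
  rw [map_mk, Path.map_ofSteps]

end PathQuot

theorem mem_map_image_ltsAlpha {A X Y : Type} {Tr : X → Option A → X → Prop} {f : X → Y}
    {x : X} {c : PathQuot A Y} :
    c ∈ PathQuot.map f '' ltsAlpha Tr x ↔
      ∃ l, IsRun Tr x l ∧ SilentButLast (l.map Prod.fst) ∧
        c = PathQuot.mk (Path.ofSteps (f x) (l.map (Prod.map id f))) := by
  constructor
  · rintro ⟨_, ⟨p, hexec, hshape, rfl⟩, rfl⟩
    obtain ⟨y, l, rfl⟩ := p.exists_eq_ofSteps
    obtain rfl : y = x := hexec.1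
    exact ⟨l, Path.isExecLTS_ofSteps.1 hexec, silentButLast_iff.2 hshape,
      PathQuot.map_mk_ofSteps f y l⟩
  · rintro ⟨l, hrun, hshape, rfl⟩
    exact ⟨_, ⟨_, Path.isExecLTS_ofSteps.2 hrun, silentButLast_iff.1 hshape, rfl⟩,
      PathQuot.map_mk_ofSteps f x l⟩

section Backward

variable {A X Y : Type} {Tr : X → Option A → X → Prop}

theorem exists_step_of_destutter_eq_singleton (f : X → Y) {w : X} {m : List (Option A × X)}
    (hrun : IsRun Tr w m) {a : Option A} {c : Y}
    (h : destutter (f w) (m.map (Prod.map id f)) = [(a, c)]) :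
    ∃ w' w'', SilentReach Tr w w' ∧ Tr w' a w'' ∧ f w' = f w ∧ f w'' = c := by
  induction hrun with
  | nil => simp at h
  | @cons w b y m hstep _ ih =>
    rw [List.map_cons, Prod.map, destutter_cons] at h
    split at h
    · next hsilent =>
      obtain ⟨w', w'', hreach, hstep', hw', hw''⟩ := ih h
      obtain rfl := hsilent.1
      exact ⟨w', w'', .head hstep hreach, hstep', hw'.trans hsilent.2, hw''⟩
    · obtain ⟨⟨rfl, rfl⟩, -⟩ := List.cons_eq_cons.1 h
      exact ⟨w, y, .refl, hstep, rfl, rfl⟩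

theorem isBranchingBisim_ker (β : Y → Set (PathQuot A Y)) (f : X → Y)
    (hβ : ∀ z, β (f z) = PathQuot.map f '' ltsAlpha Tr z) :
    IsBranchingBisim Tr fun u v => f u = f v := by
  refine ⟨fun u v h => h.symm, fun z z' w a hstep hzw => ?_⟩
  have hsingle :
      PathQuot.mk (Path.ofSteps (f z) [(a, f z')]) ∈ PathQuot.map f '' ltsAlpha Tr w := by
    rw [← hβ, ← hzw, hβ, mem_map_image_ltsAlpha]
    exact ⟨[(a, z')], .cons hstep (.nil z'), by simp [SilentButLast], rfl⟩
  obtain ⟨m, hrun, -, hm⟩ := mem_map_image_ltsAlpha.1 hsingle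
  obtain ⟨-, hd⟩ := PathQuot.mk_ofSteps_eq_mk_ofSteps_iff.1 hm
  rw [destutter_singleton] at hd
  split at hd
  · next hstutter => exact .inl ⟨hstutter.1, hstutter.2.trans hzw⟩
  · obtain ⟨w', w'', hreach, hstep', hw', hw''⟩ :=
      exists_step_of_destutter_eq_singleton f hrun hd.symm
    exact .inr ⟨w', w'', hreach, hstep', hzw.trans hw'.symm, hw''.symm⟩

end Backward

section SemiBranching

variable {A X : Type} {Tr : X → Option A → X → Prop}

def AnswersStep (Tr : X → Option A → X → Prop) (R : X → X → Prop) (x : X) (a : Option A)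
    (x' y : X) : Prop :=
  ∃ y', SilentReach Tr y y' ∧
    (a = none ∧ R x y' ∧ R x' y' ∨ ∃ y'', Tr y' a y'' ∧ R x y' ∧ R x' y'')

theorem AnswersStep.mono {R S : X → X → Prop} (hRS : ∀ u v, R u v → S u v) {x x' y : X}
    {a : Option A} (h : AnswersStep Tr R x a x' y) : AnswersStep Tr S x a x' y := by
  obtain ⟨y', hy, ⟨ha, h₁, h₂⟩ | ⟨y'', hstep, h₁, h₂⟩⟩ := h
  exacts [⟨y', hy, .inl ⟨ha, hRS _ _ h₁, hRS _ _ h₂⟩⟩,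
    ⟨y', hy, .inr ⟨y'', hstep, hRS _ _ h₁, hRS _ _ h₂⟩⟩]

theorem AnswersStep.of_silentReach {R : X → X → Prop} {x x' y z : X} {a : Option A}
    (hyz : SilentReach Tr y z) (h : AnswersStep Tr R x a x' z) : AnswersStep Tr R x a x' y :=
  let ⟨z', hz, h⟩ := h
  ⟨z', hyz.trans hz, h⟩

def IsSemiBranchingSim (Tr : X → Option A → X → Prop) (R : X → X → Prop) : Prop :=
  ∀ ⦃x x' y a⦄, Tr x a x' → R x y → AnswersStep Tr R x a x' y

theorem IsSemiBranchingSim.exists_of_silentReach {R : X → X → Prop}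
    (hR : IsSemiBranchingSim Tr R) {x x' y : X} (hxy : R x y) (hx : SilentReach Tr x x') :
    ∃ y', SilentReach Tr y y' ∧ R x' y' := by
  induction hx with
  | refl => exact ⟨y, .refl, hxy⟩
  | tail _ hstep ih =>
    obtain ⟨y₁, hy₁, h₁⟩ := ih
    obtain ⟨y₂, hy₂, ⟨-, -, h₂⟩ | ⟨y₃, hstep', -, h₃⟩⟩ := hR hstep h₁
    exacts [⟨y₂, hy₁.trans hy₂, h₂⟩, ⟨y₃, (hy₁.trans hy₂).tail hstep', h₃⟩]

theorem IsSemiBranchingSim.comp {R S : X → X → Prop} (hR : IsSemiBranchingSim Tr R)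
    (hS : IsSemiBranchingSim Tr S) : IsSemiBranchingSim Tr (Relation.Comp R S) := by
  rintro x x' z a hstep ⟨y, hxy, hyz⟩
  obtain ⟨y', hy, hanswer⟩ := hR hstep hxy
  obtain ⟨z', hz, hy'z'⟩ := hS.exists_of_silentReach hyz hy
  refine AnswersStep.of_silentReach hz ?_
  rcases hanswer with ⟨ha, h₁, h₂⟩ | ⟨y'', hstep', h₁, h₂⟩
  · exact ⟨z', .refl, .inl ⟨ha, ⟨y', h₁, hy'z'⟩, ⟨y', h₂, hy'z'⟩⟩⟩
  · obtain ⟨z'', hz', ⟨ha, h₃, h₄⟩ | ⟨z''', hstep'', h₃, h₄⟩⟩ := hS hstep' hy'z'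
    exacts [⟨z'', hz', .inl ⟨ha, ⟨y', h₁, h₃⟩, ⟨y'', h₂, h₄⟩⟩⟩,
      ⟨z'', hz', .inr ⟨z''', hstep'', ⟨y', h₁, h₃⟩, ⟨y'', h₂, h₄⟩⟩⟩]

def SemiBranchingBisimilar (Tr : X → Option A → X → Prop) (x y : X) : Prop :=
  ∃ R, IsSemiBranchingSim Tr R ∧ IsSemiBranchingSim Tr (flip R) ∧ R x y

namespace SemiBranchingBisimilar

theorem of_symm {R : X → X → Prop} (hsymm : ∀ u v, R u v → R v u)
    (hR : IsSemiBranchingSim Tr R) {x y : X} (h : R x y) : SemiBranchingBisimilar Tr x y := by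
  have hflip : flip R = R := funext₂ fun u v => propext ⟨hsymm v u, hsymm u v⟩
  exact ⟨R, hR, hflip ▸ hR, h⟩

theorem refl (x : X) : SemiBranchingBisimilar Tr x x :=
  of_symm (R := Eq) (fun _ _ => Eq.symm)
    (by rintro x x' _ a hstep rfl; exact ⟨x, .refl, .inr ⟨x', hstep, rfl, rfl⟩⟩) rfl

theorem symm {x y : X} : SemiBranchingBisimilar Tr x y → SemiBranchingBisimilar Tr y x
  | ⟨R, hR, hR', h⟩ => ⟨flip R, hR', hR, h⟩

theorem trans {x y z : X} : SemiBranchingBisimilar Tr x y → SemiBranchingBisimilar Tr y z →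
    SemiBranchingBisimilar Tr x z
  | ⟨R, hR, hR', hxy⟩, ⟨S, hS, hS', hyz⟩ =>
    ⟨Relation.Comp R S, hR.comp hS, Relation.flip_comp ▸ hS'.comp hR', y, hxy, hyz⟩

theorem isSemiBranchingSim : IsSemiBranchingSim Tr (SemiBranchingBisimilar Tr) := by
  rintro x x' y a hstep ⟨R, hR, hR', hxy⟩
  exact (hR hstep hxy).mono fun u v h => ⟨R, hR, hR', h⟩

theorem of_branchingBisimilar {x y : X} (h : BranchingBisimilar Tr x y) :
    SemiBranchingBisimilar Tr x y := by
  obtain ⟨R, ⟨hsymm, hR⟩, hxy⟩ := h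
  refine of_symm (fun u v => @hsymm u v) (fun x x' y a hstep hxy => ?_) hxy
  rcases hR x x' y a hstep hxy with ⟨ha, h'⟩ | ⟨y', y'', hy, hstep', h₁, h₂⟩
  exacts [⟨y, .refl, .inl ⟨ha, hxy, h'⟩⟩, ⟨y', hy, .inr ⟨y'', hstep', h₁, h₂⟩⟩]

theorem of_silentReach_between {z w q w' : X} (hzw : SemiBranchingBisimilar Tr z w)
    (hwq : SilentReach Tr w q) (hqw' : SilentReach Tr q w')
    (hzw' : SemiBranchingBisimilar Tr z w') : SemiBranchingBisimilar Tr z q := by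
  let R u v := SemiBranchingBisimilar Tr u v ∨ u = z ∧ v = q ∨ u = q ∧ v = z
  have hsymm : ∀ u v, R u v → R v u := by
    rintro u v (h | ⟨rfl, rfl⟩ | ⟨rfl, rfl⟩)
    exacts [.inl h.symm, .inr (.inr ⟨rfl, rfl⟩), .inr (.inl ⟨rfl, rfl⟩)]
  refine of_symm hsymm ?_ (.inr (.inl ⟨rfl, rfl⟩))
  rintro x x' y a hstep (h | ⟨rfl, rfl⟩ | ⟨rfl, rfl⟩)
  · exact (isSemiBranchingSim hstep h).mono fun _ _ => .inl
  · exact ((isSemiBranchingSim hstep hzw').of_silentReach hqw').mono fun _ _ => .inl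
  · obtain ⟨z', hz', hqz'⟩ := isSemiBranchingSim.exists_of_silentReach hzw.symm hwq
    exact ((isSemiBranchingSim hstep hqz').of_silentReach hz').mono fun _ _ => .inl

end SemiBranchingBisimilar

def semiBranchingSetoid (Tr : X → Option A → X → Prop) : Setoid X :=
  ⟨SemiBranchingBisimilar Tr, ⟨.refl, .symm, .trans⟩⟩

end SemiBranching

section Forward

variable {A X Y : Type} {Tr : X → Option A → X → Prop} (f : X → Y)

theorem exists_run_answering_step (hf : ∀ u v, SemiBranchingBisimilar Tr u v → f u = f v)
    {z z' w : X} {b : Option A} (hstep : Tr z b z') (hzw : SemiBranchingBisimilar Tr z w) :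
    ∃ m, IsRun Tr w m ∧ SilentButLast (m.map Prod.fst) ∧
      (b = none → ∀ a ∈ m.map Prod.fst, a = none) ∧
      SemiBranchingBisimilar Tr z' (lastState w m) ∧
      destutter (f w) (m.map (Prod.map id f)) = destutter (f z) [(b, f z')] := by
  obtain ⟨w₁, hw₁, hanswer⟩ := SemiBranchingBisimilar.isSemiBranchingSim hstep hzw
  have hzw₁ : SemiBranchingBisimilar Tr z w₁ := by
    rcases hanswer with ⟨-, h, -⟩ | ⟨-, -, h, -⟩ <;> exact h
  obtain ⟨m₀, hrun₀, hlast₀, hm₀⟩ := hw₁.exists_run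
  have hsilent : ∀ a ∈ m₀.map Prod.fst, a = none := by
    simpa using fun a y h => (hm₀ (a, y) h).1
  have hstutter : destutter (f w) (m₀.map (Prod.map id f)) = [] := by
    refine destutter_eq_nil ?_
    simp only [List.mem_map]
    rintro _ ⟨s, hs, rfl⟩
    obtain ⟨hs₁, hws, hsw₁⟩ := hm₀ s hs
    have hzs := SemiBranchingBisimilar.of_silentReach_between hzw hws hsw₁ hzw₁
    exact ⟨hs₁, (hf _ _ hzs).symm.trans (hf _ _ hzw)⟩
  rcases hanswer with ⟨rfl, -, hz'w₁⟩ | ⟨w₂, hstep₁, -, hz'w₂⟩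
  · refine ⟨m₀, hrun₀, silentButLast_of_forall hsilent, fun _ => hsilent, hlast₀ ▸ hz'w₁,
      ?_⟩
    rw [hstutter, destutter_singleton,
      if_pos ⟨rfl, (hf _ _ hz'w₁).trans (hf _ _ hzw₁).symm⟩]
  · refine ⟨m₀ ++ [(b, w₂)], hrun₀.append (hlast₀ ▸ .cons hstep₁ (.nil w₂)),
      ?_, ?_, ?_, ?_⟩
    · intro a ha
      rw [List.map_append, List.map_singleton, List.dropLast_concat] at ha
      exact hsilent a ha
    · intro hb a ha
      rw [List.map_append, List.mem_append] at ha
      rcases ha with ha | ha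
      exacts [hsilent a ha, by simpa [hb] using ha]
    · simpa [lastState_append] using hz'w₂
    · rw [List.map_append, destutter_append, hstutter, List.nil_append, lastState_map, hlast₀,
        List.map_singleton, Prod.map, id, ← hf _ _ hzw₁, ← hf _ _ hz'w₂]

theorem exists_run_of_semiBranchingBisimilar
    (hf : ∀ u v, SemiBranchingBisimilar Tr u v → f u = f v) {u v : X} {l : List (Option A × X)}
    (huv : SemiBranchingBisimilar Tr u v) (hrun : IsRun Tr u l)
    (hshape : SilentButLast (l.map Prod.fst)) :
    ∃ m, IsRun Tr v m ∧ SilentButLast (m.map Prod.fst) ∧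
      destutter (f v) (m.map (Prod.map id f)) = destutter (f u) (l.map (Prod.map id f)) := by
  induction hrun generalizing v with
  | nil => exact ⟨[], .nil v, silentButLast_of_forall (by simp), rfl⟩
  | @cons u b y l hstep _ ih =>
    obtain ⟨m₁, hrun₁, hshape₁, hsilent₁, hlast₁, hd₁⟩ :=
      exists_run_answering_step f hf hstep huv
    simp only [List.map_cons, silentButLast_cons, List.map_eq_nil_iff] at hshape
    rcases hshape with rfl | ⟨rfl, hshape⟩
    · exact ⟨m₁, hrun₁, hshape₁, hd₁⟩
    · obtain ⟨m₂, hrun₂, hshape₂, hd₂⟩ := ih hlast₁ hshape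
      refine ⟨m₁ ++ m₂, hrun₁.append hrun₂, ?_, ?_⟩
      · rw [List.map_append]
        exact SilentButLast.append (hsilent₁ rfl) hshape₂
      · rw [List.map_append, destutter_append, hd₁, lastState_map, hd₂]
        conv_rhs => rw [List.map_cons, ← List.singleton_append, destutter_append]
        rfl

theorem map_image_ltsAlpha_subset (hf : ∀ u v, SemiBranchingBisimilar Tr u v → f u = f v)
    {u v : X} (huv : SemiBranchingBisimilar Tr u v) :
    PathQuot.map f '' ltsAlpha Tr u ⊆ PathQuot.map f '' ltsAlpha Tr v := by
  intro c hc
  obtain ⟨l, hrun, hshape, rfl⟩ := mem_map_image_ltsAlpha.1 hc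
  obtain ⟨m, hrun', hshape', hd⟩ := exists_run_of_semiBranchingBisimilar f hf huv hrun hshape
  exact mem_map_image_ltsAlpha.2
    ⟨m, hrun', hshape', PathQuot.mk_ofSteps_eq_mk_ofSteps_iff.2 ⟨hf _ _ huv, hd.symm⟩⟩

end Forward

theorem stmt19 {A X : Type} (Tr : X → Option A → X → Prop) (x x' : X) :
    BranchingBisimilar Tr x x' ↔
    ∃ (Y : Type) (β : Y → Set (PathQuot A Y)) (f : X → Y),
      (∀ z : X, β (f z) = PathQuot.map f '' ltsAlpha Tr z) ∧ f x = f x' := by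
  constructor
  · intro hxx'
    let f : X → Quotient (semiBranchingSetoid Tr) := Quotient.mk _
    have hf : ∀ u v, SemiBranchingBisimilar Tr u v → f u = f v := fun _ _ h => Quotient.sound h
    refine ⟨_, fun y => PathQuot.map f '' ltsAlpha Tr y.out, f, fun z => ?_,
      hf _ _ (.of_branchingBisimilar hxx')⟩
    have hz : SemiBranchingBisimilar Tr (f z).out z :=
      Quotient.mk_out (s := semiBranchingSetoid Tr) z
    exact (map_image_ltsAlpha_subset f hf hz).antisymm (map_image_ltsAlpha_subset f hf hz.symm)
  · rintro ⟨Y, β, f, hβ, hxx'⟩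
    exact ⟨_, isBranchingBisim_ker β f hβ, hxx'⟩

end PaperBB
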